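/- Let l₁, l₂ > 0 and g₁, f₁ ∈ L²(0, l₁), g₂, f₂ ∈ L²(0, l₂). Suppose that ∫₀^{l₁} g₁ v₁′ + ∫₀^{l₁} f₁ v₁ + ∫₀^{l₂} g₂ v₂′ + ∫₀^{l₂} f₂ v₂ = 0 for all v₁ ∈ H¹(0,l₁), v₂ ∈ H¹(0,l₂) with v₁(0) = 0, v₂(0) = v₁(l₁), and v₂(l₂) = 0. Then g₁ ∈ H¹(0,l₁), g₂ ∈ H¹(0,l₂) with g₁′ = f₁, g₂′ = f₂ a.e., and moreover g₁(l₁) = g₂(0). -/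

import Mathlib

/-!
On each edge, integrating `f` by parts against its primitive `F` shows that `g - F` is orthogonal
to every continuous function of mean zero (these are the derivatives of the admissible test
functions), so `g - F` is a.e. a constant `C` (du Bois-Reymond). Once `g = C + F`, integration by
parts reduces the weak identity on an edge to the boundary terms `(C + F(l)) v(l) - C v(0)`;
a test function that is linear on each edge with value `1` at the internal vertex then leaves
exactly `C₁ + F₁(l₁) - C₂ = 0`.
-/

open MeasureTheory intervalIntegral Set

theorem IntervalIntegrable.of_sq {f : ℝ → ℝ} {a b : ℝ} (hab : a ≤ b)
    (hf : AEStronglyMeasurable f (volume.restrict (Ioc a b)))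
    (hf2 : IntervalIntegrable (fun t => f t ^ 2) volume a b) :
    IntervalIntegrable f volume a b := by
  rw [intervalIntegrable_iff_integrableOn_Ioc_of_le hab] at hf2 ⊢
  exact ((memLp_two_iff_integrable_sq hf).2 hf2).integrable one_le_two

theorem integral_primitive_mul_deriv_add_integral_mul {f v v' : ℝ → ℝ} {a b : ℝ}
    (hf : IntervalIntegrable f volume a b) (hv : ∀ t, HasDerivAt v (v' t) t)
    (hv' : Continuous v') :
    (∫ t in a..b, (∫ s in a..t, f s) * v' t) + ∫ t in a..b, f t * v t
      = (∫ s in a..b, f s) * v b := by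
  have hF := hf.absolutelyContinuousOnInterval_intervalIntegral (c := a) left_mem_uIcc
  have hderiv : deriv v = v' := funext fun t => (hv t).deriv
  have hvC : ContDiff ℝ 1 v :=
    contDiff_one_iff_deriv.2 ⟨fun t => (hv t).differentiableAt, hderiv ▸ hv'⟩
  have hparts := hF.integral_deriv_mul_eq_sub hvC.contDiffOn.absolutelyContinuousOnInterval
  have hcongr : ∀ᵐ t, t ∈ uIoc a b →
      deriv (fun x => ∫ s in a..x, f s) t * v t + (∫ s in a..t, f s) * deriv v t
        = f t * v t + (∫ s in a..t, f s) * v' t := by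
    filter_upwards [hf.ae_hasDerivAt_integral] with t ht htab
    rw [(ht (uIoc_subset_uIcc htab) a left_mem_uIcc).deriv, hderiv]
  rw [integral_congr_ae hcongr, intervalIntegral.integral_add, integral_same, zero_mul,
    sub_zero] at hparts
  · linarith
  · exact hf.mul_continuousOn hvC.continuous.continuousOn
  · exact hF.continuousOn.intervalIntegrable.mul_continuousOn hv'.continuousOn

theorem exists_ae_eq_const_of_integral_mul_deriv_eq_zero {h : ℝ → ℝ} {a b : ℝ} (hab : a < b)
    (hh : IntervalIntegrable h volume a b)
    (H : ∀ v v' : ℝ → ℝ, (∀ t, HasDerivAt v (v' t) t) → Continuous v' → v a = 0 → v b = 0 →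
      ∫ t in a..b, h t * v' t = 0) :
    ∃ c, ∀ᵐ t, t ∈ Ioo a b → h t = c := by
  have hba : b - a ≠ 0 := (sub_pos.2 hab).ne'
  set c := (∫ t in a..b, h t) / (b - a)
  refine ⟨c, ?_⟩
  have horth : ∀ ψ : ℝ → ℝ, Continuous ψ → ∫ t in a..b, (h t - c) * ψ t = 0 := by
    intro ψ hψ
    set m := (∫ t in a..b, ψ t) / (b - a)
    have hv : ∀ t, HasDerivAt (fun x => (∫ s in a..x, ψ s) - m * (x - a)) (ψ t - m) t :=
      fun t => (hψ.integral_hasStrictDerivAt a t).hasDerivAt.sub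
        (((hasDerivAt_id t).sub_const a).const_mul m |>.congr_deriv (mul_one m))
    have hψm := H _ _ hv (hψ.sub continuous_const) (by simp) (by simp [m]; field_simp; ring)
    have hhψ : IntervalIntegrable (fun t => h t * ψ t) volume a b :=
      hh.mul_continuousOn hψ.continuousOn
    calc ∫ t in a..b, (h t - c) * ψ t
        = (∫ t in a..b, h t * ψ t) - c * ∫ t in a..b, ψ t := by
          simp only [sub_mul]
          rw [integral_sub hhψ ((hψ.intervalIntegrable a b).const_mul c),
            intervalIntegral.integral_const_mul]
      _ = (∫ t in a..b, h t * ψ t) - m * ∫ t in a..b, h t := by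
          simp only [c, m]; field_simp
      _ = ∫ t in a..b, h t * (ψ t - m) := by
          simp only [mul_sub]
          rw [integral_sub hhψ (hh.mul_const m), intervalIntegral.integral_mul_const, mul_comm]
      _ = 0 := hψm
  have hloc : LocallyIntegrable (fun t => h t - c) (volume.restrict (Ioc a b)) :=
    ((intervalIntegrable_iff_integrableOn_Ioc_of_le hab.le).1
      (hh.sub intervalIntegrable_const)).locallyIntegrable
  have hae := ae_eq_zero_of_integral_contDiff_smul_eq_zero hloc fun ψ hψ _ => by
    rw [← integral_of_le hab.le]
    simpa only [smul_eq_mul, mul_comm] using horth ψ hψ.continuous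
  rw [ae_restrict_iff' measurableSet_Ioc] at hae
  filter_upwards [hae] with t ht htI
  exact sub_eq_zero.1 (ht (Ioo_subset_Ioc_self htI))

theorem exists_ae_eq_const_add_primitive_of_weak_deriv {g f : ℝ → ℝ} {a b : ℝ} (hab : a < b)
    (hg : IntervalIntegrable g volume a b) (hf : IntervalIntegrable f volume a b)
    (H : ∀ v v' : ℝ → ℝ, (∀ t, HasDerivAt v (v' t) t) → Continuous v' → v a = 0 → v b = 0 →
      (∫ t in a..b, g t * v' t) + ∫ t in a..b, f t * v t = 0) :
    ∃ C, ∀ᵐ t, t ∈ Ioo a b → g t = C + ∫ s in a..t, f s := by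
  have hF : IntervalIntegrable (fun t => ∫ s in a..t, f s) volume a b :=
    (continuousOn_primitive_interval' hf left_mem_uIcc).intervalIntegrable
  obtain ⟨C, hC⟩ := exists_ae_eq_const_of_integral_mul_deriv_eq_zero hab (hg.sub hF)
    fun v v' hv hv' hva hvb => by
      have hparts := integral_primitive_mul_deriv_add_integral_mul hf hv hv'
      rw [hvb, mul_zero] at hparts
      simp only [sub_mul]
      rw [integral_sub (hg.mul_continuousOn hv'.continuousOn)
        (hF.mul_continuousOn hv'.continuousOn)]
      linarith [H v v' hv hv' hva hvb]
  refine ⟨C, ?_⟩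
  filter_upwards [hC] with t ht htI
  linarith [ht htI]

theorem integral_mul_deriv_add_integral_mul_of_ae_eq_const_add_primitive {g f v v' : ℝ → ℝ}
    {a b C : ℝ} (hab : a ≤ b) (hf : IntervalIntegrable f volume a b)
    (hgf : ∀ᵐ t, t ∈ Ioo a b → g t = C + ∫ s in a..t, f s)
    (hv : ∀ t, HasDerivAt v (v' t) t) (hv' : Continuous v') :
    (∫ t in a..b, g t * v' t) + ∫ t in a..b, f t * v t
      = (C + ∫ s in a..b, f s) * v b - C * v a := by
  have hF : IntervalIntegrable (fun t => ∫ s in a..t, f s) volume a b :=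
    (continuousOn_primitive_interval' hf left_mem_uIcc).intervalIntegrable
  have hgv' : ∫ t in a..b, g t * v' t = ∫ t in a..b, (C + ∫ s in a..t, f s) * v' t := by
    rw [integral_of_le hab, integral_of_le hab, integral_Ioc_eq_integral_Ioo,
      integral_Ioc_eq_integral_Ioo]
    refine setIntegral_congr_ae measurableSet_Ioo ?_
    filter_upwards [hgf] with t ht htI
    rw [ht htI]
  have hFTC : ∫ t in a..b, v' t = v b - v a :=
    integral_eq_sub_of_hasDerivAt (fun t _ => hv t) (hv'.intervalIntegrable a b)
  have hparts := integral_primitive_mul_deriv_add_integral_mul hf hv hv'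
  simp only [add_mul] at hgv'
  rw [hgv', integral_add ((hv'.intervalIntegrable a b).const_mul C)
    (hF.mul_continuousOn hv'.continuousOn), intervalIntegral.integral_const_mul, hFTC]
  linarith

/-- Lemma 2 on a two-edge path graph (`m = 2`, `d = 1`): from the weak variational
identity tested against all `v₁ ∈ H¹(0,l₁)`, `v₂ ∈ H¹(0,l₂)` with `v₁(0) = 0`,
`v₂(0) = v₁(l₁)`, `v₂(l₂) = 0`, one gets `g₁ ∈ H¹(0,l₁)`, `g₂ ∈ H¹(0,l₂)` with
`g₁' = f₁`, `g₂' = f₂` a.e., and the Kirchhoff-type matching `g₁(l₁) = g₂(0)`. -/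
theorem stmt_10 (l₁ l₂ : ℝ) (hl₁ : 0 < l₁) (hl₂ : 0 < l₂)
    (g₁ f₁ g₂ f₂ : ℝ → ℝ)
    (hg₁ : AEStronglyMeasurable g₁ (volume.restrict (Set.Ioc (0:ℝ) l₁)))
    (hg₁2 : IntervalIntegrable (fun t => (g₁ t) ^ 2) volume 0 l₁)
    (hf₁ : AEStronglyMeasurable f₁ (volume.restrict (Set.Ioc (0:ℝ) l₁)))
    (hf₁2 : IntervalIntegrable (fun t => (f₁ t) ^ 2) volume 0 l₁)
    (hg₂ : AEStronglyMeasurable g₂ (volume.restrict (Set.Ioc (0:ℝ) l₂)))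
    (hg₂2 : IntervalIntegrable (fun t => (g₂ t) ^ 2) volume 0 l₂)
    (hf₂ : AEStronglyMeasurable f₂ (volume.restrict (Set.Ioc (0:ℝ) l₂)))
    (hf₂2 : IntervalIntegrable (fun t => (f₂ t) ^ 2) volume 0 l₂)
    (horth : ∀ v₁ v₁' v₂ v₂' : ℝ → ℝ,
      (∀ t, HasDerivAt v₁ (v₁' t) t) →
      (∀ t, HasDerivAt v₂ (v₂' t) t) →
      IntervalIntegrable (fun t => (v₁' t) ^ 2) volume 0 l₁ →
      IntervalIntegrable (fun t => (v₂' t) ^ 2) volume 0 l₂ →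
      v₁ 0 = 0 → v₂ 0 = v₁ l₁ → v₂ l₂ = 0 →
      (∫ t in (0:ℝ)..l₁, g₁ t * v₁' t) + (∫ t in (0:ℝ)..l₁, f₁ t * v₁ t)
        + (∫ t in (0:ℝ)..l₂, g₂ t * v₂' t) + (∫ t in (0:ℝ)..l₂, f₂ t * v₂ t) = 0) :
    ∃ C₁ C₂ : ℝ,
      (∀ᵐ t ∂volume, t ∈ Set.Ioo (0:ℝ) l₁ → g₁ t = C₁ + ∫ s in (0:ℝ)..t, f₁ s) ∧
      (∀ᵐ t ∂volume, t ∈ Set.Ioo (0:ℝ) l₂ → g₂ t = C₂ + ∫ s in (0:ℝ)..t, f₂ s) ∧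
      C₁ + (∫ s in (0:ℝ)..l₁, f₁ s) = C₂ := by
  have hg₁i := IntervalIntegrable.of_sq hl₁.le hg₁ hg₁2
  have hf₁i := IntervalIntegrable.of_sq hl₁.le hf₁ hf₁2
  have hg₂i := IntervalIntegrable.of_sq hl₂.le hg₂ hg₂2
  have hf₂i := IntervalIntegrable.of_sq hl₂.le hf₂ hf₂2
  have hzero (l : ℝ) : IntervalIntegrable (fun _ => (0 : ℝ) ^ 2) volume 0 l :=
    intervalIntegrable_const
  obtain ⟨C₁, hC₁⟩ := exists_ae_eq_const_add_primitive_of_weak_deriv hl₁ hg₁i hf₁i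
    fun v v' hv hv' hv0 hvl => by
      simpa using horth v v' 0 0 hv (fun t => hasDerivAt_const t 0)
        ((hv'.pow 2).intervalIntegrable 0 l₁) (hzero l₂) hv0 hvl.symm rfl
  obtain ⟨C₂, hC₂⟩ := exists_ae_eq_const_add_primitive_of_weak_deriv hl₂ hg₂i hf₂i
    fun v v' hv hv' hv0 hvl => by
      simpa using horth 0 0 v v' (fun t => hasDerivAt_const t 0) hv
        (hzero l₁) ((hv'.pow 2).intervalIntegrable 0 l₂) rfl hv0 hvl
  refine ⟨C₁, C₂, hC₁, hC₂, ?_⟩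
  have hv₁ (t : ℝ) : HasDerivAt (fun t => t / l₁) (1 / l₁) t := (hasDerivAt_id' t).div_const l₁
  have hv₂ (t : ℝ) : HasDerivAt (fun t => 1 - t / l₂) (-(1 / l₂)) t :=
    ((hasDerivAt_id' t).div_const l₂).const_sub 1
  have h := horth _ _ _ _ hv₁ hv₂ intervalIntegrable_const intervalIntegrable_const
    (by simp) (by simp [hl₁.ne']) (by simp [hl₂.ne'])
  rw [integral_mul_deriv_add_integral_mul_of_ae_eq_const_add_primitive hl₁.le hf₁i hC₁ hv₁
      continuous_const, add_assoc,
    integral_mul_deriv_add_integral_mul_of_ae_eq_const_add_primitive hl₂.le hf₂i hC₂ hv₂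
      continuous_const] at h
  simp only [div_self hl₁.ne', div_self hl₂.ne', zero_div, mul_one, mul_zero, sub_zero, sub_self,
    zero_sub] at h
  linarith
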